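/- For every a ∈ ℝ, η ∈ ℝ, all cycle configurations ω = (X,X̄,σ,T), ω' = (X',X̄',σ',T') and all Z, Γ ∈ ℝ (including the value +∞ when the constraint is violated), the middle Hamiltonian satisfies the reflection symmetry H_middle,a,η(ω | Z, Γ | ω') = H_middle,a,−η(ω'^↔ | Z, −Γ | ω^↔), where ↔ is the involution of {A,B,C,D} with A^↔ = B, B^↔ = A, C^↔ = C, D^↔ = D, and (X,X̄,σ,T)^↔ := (X,X̄,σ,T^↔). -/

import Mathlib

open MeasureTheory Real

/-- Tree labels A, B, C, D encoded as `Fin 4`. -/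
abbrev TreeLabel := Fin 4

def lA : TreeLabel := 0
def lB : TreeLabel := 1
def lC : TreeLabel := 2
def lD : TreeLabel := 3

/-- A cycle configuration `(X, X̄, σ, T)`; the sign `σ` is encoded as a `Bool`. -/
abbrev CycleConfig := ℝ × ℝ × Bool × TreeLabel

/-- The numerical value of a sign. -/
noncomputable def sgnv (b : Bool) : ℝ := if b then 1 else -1

/-- Real-valued indicator of a proposition. -/
noncomputable def indR (p : Prop) [Decidable p] : ℝ := if p then 1 else 0

/-- `U = (X + X̄)/2`. -/
noncomputable def Uof (ω : CycleConfig) : ℝ := (ω.1 + ω.2.1) / 2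

/-- `W = Γ + U' − U`. -/
noncomputable def Wof (ω : CycleConfig) (Γ : ℝ) (ω' : CycleConfig) : ℝ :=
  Γ + Uof ω' - Uof ω

noncomputable def Hln (a : ℝ) (ω : CycleConfig) (Z Γ : ℝ) (ω' : CycleConfig) : ℝ :=
  ((3 * a + 1) / 2) *
    (Real.log (exp (ω.1 + Wof ω Γ ω' / 2) + exp (ω'.1 - Wof ω Γ ω' / 2) + exp Z)
      + Real.log (exp (ω.2.1 + Wof ω Γ ω' / 2) + exp (ω'.2.1 - Wof ω Γ ω' / 2) + exp Z))

noncomputable def Hlinear (a : ℝ) (ω : CycleConfig) (Z : ℝ) (ω' : CycleConfig) : ℝ :=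
  -(a + 1 / 2) * (Uof ω + Uof ω' + Z)

noncomputable def Htree (ω : CycleConfig) (Z Γ : ℝ) (ω' : CycleConfig) : ℝ :=
  (1 / 2) * (indR (ω.2.2.2 = lC) * ω.1 + indR (ω.2.2.2 = lD) * ω.2.1
      + indR (ω'.2.2.2 = lC) * ω'.1 + indR (ω'.2.2.2 = lD) * ω'.2.1)
    + (indR (ω'.2.2.2 = lB) + indR (ω.2.2.2 = lA)) * Z
    + (1 / 2) * (indR (ω'.2.2.2 = lB) - indR (ω.2.2.2 = lA)) * Wof ω Γ ω'
    - (1 / 2) * (indR (ω.2.2.2 = lA) - indR (ω.2.2.2 = lB)) * Uof ω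
    + (1 / 2) * (indR (ω'.2.2.2 = lA) - indR (ω'.2.2.2 = lB)) * Uof ω'

noncomputable def HexpI (ω : CycleConfig) (ω' : CycleConfig) : ℝ :=
  (1 / 4) * (exp (-ω.1) + exp (-ω.2.1) + exp (-ω'.1) + exp (-ω'.2.1))

noncomputable def HexpII (ω : CycleConfig) (Z Γ : ℝ) (ω' : CycleConfig) : ℝ :=
  (1 / 2) * (sgnv ω.2.2.1 * exp (Wof ω Γ ω' / 4) - sgnv ω'.2.2.1 * exp (-Wof ω Γ ω' / 4)) ^ 2
    * exp (-Z)

/-- The (finite part of the) middle Hamiltonian `H_middle,a,η`. -/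
noncomputable def Hmid (a η : ℝ) (ω : CycleConfig) (Z Γ : ℝ) (ω' : CycleConfig) : ℝ :=
  Hln a ω Z Γ ω' + Hlinear a ω Z ω' + Htree ω Z Γ ω' + HexpI ω ω' + HexpII ω Z Γ ω' - η * Γ

/-- The left boundary Hamiltonian `H_left,a(Z|ω)`. -/
noncomputable def Hleft (a : ℝ) (Z : ℝ) (ω : CycleConfig) : ℝ :=
  a * Real.log (exp ω.2.1 + exp Z)
    + (a + 1 / 2) * (Real.log (exp ω.1 + exp Z) - Uof ω - Z)
    + (1 / 2) * (indR (ω.2.2.2 = lC) * ω.1 + indR (ω.2.2.2 = lD) * ω.2.1)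
    + indR (ω.2.2.2 = lB) * Z
    + (1 / 2) * (indR (ω.2.2.2 = lA) - indR (ω.2.2.2 = lB)) * Uof ω
    + (1 / 4) * (exp (-ω.1) + exp (-ω.2.1)) + (1 / 2) * exp (-Z)
    + Uof ω / 4

/-- The right boundary Hamiltonian `H_right,a(ω|Z)`. -/
noncomputable def Hright (a : ℝ) (ω : CycleConfig) (Z : ℝ) : ℝ :=
  (a + 1 / 2) * (Real.log (exp ω.1 + exp Z) + Real.log (exp ω.2.1 + exp Z) - Uof ω - Z)
    + (1 / 2) * (indR (ω.2.2.2 = lC) * ω.1 + indR (ω.2.2.2 = lD) * ω.2.1)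
    + indR (ω.2.2.2 = lA) * Z
    - (1 / 2) * (indR (ω.2.2.2 = lA) - indR (ω.2.2.2 = lB)) * Uof ω
    + (1 / 4) * (exp (-ω.1) + exp (-ω.2.1)) + (1 / 2) * exp (-Z)
    - Uof ω / 4

/-- The reflection `↔` on tree labels: `A ↔ B`, `C` and `D` fixed. -/
def flipLabel (T : TreeLabel) : TreeLabel :=
  if T = lA then lB else if T = lB then lA else T

/-- The reflection on cycle configurations: only the tree label is reflected. -/
def flipConfig (ω : CycleConfig) : CycleConfig := (ω.1, ω.2.1, ω.2.2.1, flipLabel ω.2.2.2)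

/-- The middle Hamiltonian with values in `EReal`, equal to `+∞` exactly when the
constraint `(T, T') ≠ (A, B)` is violated. -/
noncomputable def HmidE (a η : ℝ) (ω : CycleConfig) (Z Γ : ℝ) (ω' : CycleConfig) : EReal :=
  if ω.2.2.2 = lA ∧ ω'.2.2.2 = lB then ⊤ else (Hmid a η ω Z Γ ω' : EReal)

/-! The reflection (ω, Γ, ω') ↦ (ω'^↔, −Γ, ω^↔) swaps U and U' and negates Γ, hence negates
W = Γ + U' − U. Every summand of the middle Hamiltonian is invariant: the logarithms and
exponentials merely exchange their two arguments, in the tree term the indicator of T = A for the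
left configuration becomes that of T' = B for the right one, and η Γ is unchanged as both factors
change sign. The constraint (T, T') ≠ (A, B) is mapped onto itself. -/

lemma flipLabel_eq_lA_iff (T : TreeLabel) : flipLabel T = lA ↔ T = lB := by revert T; decide

lemma flipLabel_eq_lB_iff (T : TreeLabel) : flipLabel T = lB ↔ T = lA := by revert T; decide

lemma flipLabel_eq_lC_iff (T : TreeLabel) : flipLabel T = lC ↔ T = lC := by revert T; decide

lemma flipLabel_eq_lD_iff (T : TreeLabel) : flipLabel T = lD ↔ T = lD := by revert T; decide

lemma Uof_flipConfig (ω : CycleConfig) : Uof (flipConfig ω) = Uof ω := rfl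

lemma Wof_flipConfig (ω ω' : CycleConfig) (Γ : ℝ) :
    Wof (flipConfig ω') (-Γ) (flipConfig ω) = -Wof ω Γ ω' := by
  simp only [Wof, Uof_flipConfig]; ring

section Reflection

variable (ω ω' : CycleConfig) (Z Γ : ℝ)

lemma Hln_flipConfig (a : ℝ) : Hln a (flipConfig ω') Z (-Γ) (flipConfig ω) = Hln a ω Z Γ ω' := by
  simp only [Hln, Wof_flipConfig]
  simp only [flipConfig]
  ring_nf

lemma Hlinear_flipConfig (a : ℝ) :
    Hlinear a (flipConfig ω') Z (flipConfig ω) = Hlinear a ω Z ω' := by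
  simp only [Hlinear, Uof_flipConfig]; ring

lemma Htree_flipConfig : Htree (flipConfig ω') Z (-Γ) (flipConfig ω) = Htree ω Z Γ ω' := by
  simp only [Htree, Wof_flipConfig, Uof_flipConfig]
  simp only [flipConfig, flipLabel_eq_lA_iff, flipLabel_eq_lB_iff, flipLabel_eq_lC_iff,
    flipLabel_eq_lD_iff]
  ring

lemma HexpI_flipConfig : HexpI (flipConfig ω') (flipConfig ω) = HexpI ω ω' := by
  simp only [HexpI, flipConfig]; ring

lemma HexpII_flipConfig : HexpII (flipConfig ω') Z (-Γ) (flipConfig ω) = HexpII ω Z Γ ω' := by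
  simp only [HexpII, Wof_flipConfig]
  simp only [flipConfig, neg_neg]; ring

lemma Hmid_flipConfig (a η : ℝ) :
    Hmid a (-η) (flipConfig ω') Z (-Γ) (flipConfig ω) = Hmid a η ω Z Γ ω' := by
  simp only [Hmid, Hln_flipConfig, Hlinear_flipConfig, Htree_flipConfig, HexpI_flipConfig,
    HexpII_flipConfig]
  ring

end Reflection

/-- Reflection symmetry (2.49) of the middle Hamiltonian:
`H_middle,a,η(ω|Z,Γ|ω') = H_middle,a,−η(ω'^↔|Z,−Γ|ω^↔)`, including the value `+∞`. -/
theorem middle_hamiltonian_reflection_symmetry (a η : ℝ) (ω ω' : CycleConfig) (Z Γ : ℝ) :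
    HmidE a η ω Z Γ ω' = HmidE a (-η) (flipConfig ω') Z (-Γ) (flipConfig ω) := by
  have constraint_iff : (flipConfig ω').2.2.2 = lA ∧ (flipConfig ω).2.2.2 = lB ↔
      ω.2.2.2 = lA ∧ ω'.2.2.2 = lB := by
    simp only [flipConfig, flipLabel_eq_lA_iff, flipLabel_eq_lB_iff, and_comm]
  unfold HmidE
  simp only [constraint_iff, Hmid_flipConfig]
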